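/- Let f_N(x) = (1-x^2)(P_N'(x))^2 + N^2 P_N(x)^2 for N \ge 2. If x_+ in (-1,1) satisfies P_N(x_+) = x_+ P_{N-1}(x_+) and P_N'(x_+) \ne 0, then f_N''(x_+) = -2(N-1)(P_N'(x_+))^2/(1-x_+^2) < 0; i.e., every such stationary point of f_N is a strict local maximum. -/

import Mathlib

/-!
Write `f = (1 - X²) p'² + n² p²` for a solution `p` of Legendre's equation
`(1 - X²) p'' = 2 X p' - n (n + 1) p`. The equation turns `f'` into `2 p' (X p' - n p)`, so the
stationary points with `p' ≠ 0` are those with `x p'(x) = n p(x)`, and there the equation again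
gives `(1 - x²) f''(x) = -2 (n - 1) p'(x)²`. For `p = P_N` the three-term relation
`(1 - X²) P_N' = N (P_{N-1} - X P_N)` shows that `P_N(x) = x P_{N-1}(x)` forces
`x P_N'(x) = N P_N(x)`.
-/

noncomputable def legendreP : ℕ → ℝ → ℝ
  | 0, _ => 1
  | 1, x => x
  | (n + 2), x =>
      ((2 * (n : ℝ) + 3) * x * legendreP (n + 1) x - ((n : ℝ) + 1) * legendreP n x) /
        ((n : ℝ) + 2)

open Polynomial

section LegendreEquation

variable {n x : ℝ} {p : ℝ[X]}

noncomputable def christoffelPoly (n : ℝ) (p : ℝ[X]) : ℝ[X] :=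
  (1 - X ^ 2) * derivative p ^ 2 + C (n ^ 2) * p ^ 2

theorem derivative_christoffelPoly
    (hp : (1 - X ^ 2) * derivative (derivative p) = 2 * X * derivative p - C (n * (n + 1)) * p) :
    derivative (christoffelPoly n p) = 2 * derivative p * (X * derivative p - C n * p) := by
  simp only [christoffelPoly, derivative_mul, derivative_sub, derivative_one, derivative_X,
    derivative_C, derivative_pow, map_mul, map_add, map_pow, map_one, Nat.cast_ofNat, map_ofNat]
    at hp ⊢
  linear_combination 2 * derivative p * hp

theorem eval_derivative_derivative_christoffelPoly
    (hp : (1 - X ^ 2) * derivative (derivative p) = 2 * X * derivative p - C (n * (n + 1)) * p)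
    (hx : 1 - x ^ 2 ≠ 0) (hcrit : x * (derivative p).eval x = n * p.eval x) :
    (derivative (derivative (christoffelPoly n p))).eval x =
      -2 * (n - 1) * (derivative p).eval x ^ 2 / (1 - x ^ 2) := by
  have hp_x := congrArg (eval x) hp
  rw [derivative_christoffelPoly hp]
  simp only [derivative_mul, derivative_sub, derivative_X, derivative_C, derivative_ofNat,
    eval_add, eval_sub, eval_mul, eval_one, eval_pow, eval_C, eval_X, eval_zero, eval_ofNat]
    at hp_x ⊢
  rw [eq_div_iff hx]
  linear_combination (2 * (derivative (derivative p)).eval x * (1 - x ^ 2)) * hcrit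
    + 2 * (derivative p).eval x * x * hp_x
    + 2 * (derivative p).eval x * x * (n + 1) * hcrit

end LegendreEquation

noncomputable def legendrePoly : ℕ → ℝ[X]
  | 0 => 1
  | 1 => X
  | (n + 2) => C ((n : ℝ) + 2)⁻¹ *
      ((2 * (n : ℝ[X]) + 3) * X * legendrePoly (n + 1) - ((n : ℝ[X]) + 1) * legendrePoly n)

theorem legendreP_eq_eval (n : ℕ) (x : ℝ) : legendreP n x = (legendrePoly n).eval x := by
  induction n using Nat.strong_induction_on with
  | _ n ih =>
    match n with
    | 0 => simp [legendreP, legendrePoly]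
    | 1 => simp [legendreP, legendrePoly]
    | n + 2 =>
      simp only [legendreP, legendrePoly, eval_mul, eval_sub, eval_C, eval_X, eval_add,
        eval_natCast, eval_ofNat, eval_one, ih n (by omega), ih (n + 1) (by omega)]
      field_simp

theorem deriv_legendreP (n : ℕ) :
    deriv (legendreP n) = fun x => (derivative (legendrePoly n)).eval x := by
  ext x
  rw [show legendreP n = fun x => (legendrePoly n).eval x from funext (legendreP_eq_eval n)]
  exact Polynomial.deriv _

theorem natCast_mul_legendrePoly_add_two (n : ℕ) :
    ((n : ℝ[X]) + 2) * legendrePoly (n + 2) =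
      (2 * (n : ℝ[X]) + 3) * X * legendrePoly (n + 1) - ((n : ℝ[X]) + 1) * legendrePoly n := by
  rw [legendrePoly, ← mul_assoc, show ((n : ℝ[X]) + 2) = C ((n : ℝ) + 2) by simp [map_ofNat],
    ← C_mul, mul_inv_cancel₀ (by positivity), C_1, one_mul]

theorem derivative_legendrePoly_succ_and_X_mul (n : ℕ) :
    derivative (legendrePoly (n + 1)) =
        X * derivative (legendrePoly n) + ((n : ℝ[X]) + 1) * legendrePoly n ∧
      X * derivative (legendrePoly (n + 1)) =
        derivative (legendrePoly n) + ((n : ℝ[X]) + 1) * legendrePoly (n + 1) := by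
  induction n with
  | zero => simp [legendrePoly]
  | succ n ih =>
    obtain ⟨hA, hB⟩ := ih
    have hrec := natCast_mul_legendrePoly_add_two n
    have hrec' := congrArg derivative hrec
    simp only [derivative_mul, derivative_add, derivative_sub, derivative_natCast, derivative_ofNat, derivative_one,
      derivative_X, zero_mul, zero_add, add_zero] at hrec'
    have hA' : derivative (legendrePoly (n + 2)) =
        X * derivative (legendrePoly (n + 1)) + ((n : ℝ[X]) + 2) * legendrePoly (n + 1) := by
      refine mul_left_cancel₀ (a := (n : ℝ[X]) + 2) (by exact_mod_cast (by omega : n + 2 ≠ 0)) ?_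
      linear_combination hrec' + ((n : ℝ[X]) + 1) * hB
    push_cast
    refine ⟨by linear_combination hA', ?_⟩
    linear_combination X * hA' - hA + X * hB - hrec

theorem one_sub_X_sq_mul_derivative_legendrePoly_succ (n : ℕ) :
    (1 - X ^ 2) * derivative (legendrePoly (n + 1)) =
      ((n : ℝ[X]) + 1) * (legendrePoly n - X * legendrePoly (n + 1)) := by
  obtain ⟨hA, hB⟩ := derivative_legendrePoly_succ_and_X_mul n
  linear_combination hA - X * hB

theorem legendrePoly_ode (n : ℕ) :
    (1 - X ^ 2) * derivative (derivative (legendrePoly n)) =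
      2 * X * derivative (legendrePoly n) - C ((n : ℝ) * (n + 1)) * legendrePoly n := by
  obtain ⟨hA, hB⟩ := derivative_legendrePoly_succ_and_X_mul n
  have h : (1 - X ^ 2) * derivative (legendrePoly n) =
      ((n : ℝ[X]) + 1) * (X * legendrePoly n - legendrePoly (n + 1)) := by
    linear_combination X * hA - hB
  have h' := congrArg derivative h
  simp only [derivative_mul, derivative_add, derivative_sub, derivative_natCast, derivative_one,
    derivative_X_sq, map_ofNat, derivative_X, zero_mul, zero_add] at h'
  simp only [map_mul, map_add, map_natCast, map_one]
  linear_combination h' - ((n : ℝ[X]) + 1) * hA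

theorem X_mul_derivative_legendrePoly_succ_eval {n : ℕ} {x : ℝ} (hx : 1 - x ^ 2 ≠ 0)
    (hstat : (legendrePoly (n + 1)).eval x = x * (legendrePoly n).eval x) :
    x * (derivative (legendrePoly (n + 1))).eval x = (n + 1) * (legendrePoly (n + 1)).eval x := by
  have h := congrArg (eval x) (one_sub_X_sq_mul_derivative_legendrePoly_succ n)
  simp only [eval_mul, eval_sub, eval_add, eval_pow, eval_one, eval_X, eval_natCast] at h
  have hderiv : (derivative (legendrePoly (n + 1))).eval x = (n + 1) * (legendrePoly n).eval x := by
    refine mul_left_cancel₀ hx ?_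
    linear_combination h - (n + 1) * x * hstat
  rw [hderiv, hstat]
  ring

theorem deriv_deriv_eval (p : ℝ[X]) (x : ℝ) :
    deriv (deriv fun y => p.eval y) x = (derivative (derivative p)).eval x := by
  rw [show (deriv fun y => p.eval y) = fun y => (derivative p).eval y from
    funext fun _ => Polynomial.deriv p]
  exact Polynomial.deriv _

theorem christoffel_stationary_local_max (N : ℕ) (hN : 2 ≤ N) (x : ℝ)
    (hx : x ∈ Set.Ioo (-1 : ℝ) 1)
    (hstat : legendreP N x = x * legendreP (N - 1) x)
    (hderiv : deriv (legendreP N) x ≠ 0) :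
    deriv (deriv (fun y : ℝ =>
        (1 - y ^ 2) * (deriv (legendreP N) y) ^ 2 + (N : ℝ) ^ 2 * (legendreP N y) ^ 2)) x =
      -2 * ((N : ℝ) - 1) * (deriv (legendreP N) x) ^ 2 / (1 - x ^ 2) ∧
    deriv (deriv (fun y : ℝ =>
        (1 - y ^ 2) * (deriv (legendreP N) y) ^ 2 + (N : ℝ) ^ 2 * (legendreP N y) ^ 2)) x < 0 := by
  obtain ⟨n, rfl⟩ : ∃ n, N = n + 1 := ⟨N - 1, by omega⟩
  have hx2 : 0 < 1 - x ^ 2 := by nlinarith [hx.1, hx.2]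
  have hcrit := X_mul_derivative_legendrePoly_succ_eval (n := n) hx2.ne'
    (by simpa only [legendreP_eq_eval, Nat.add_sub_cancel] using hstat)
  have hF : (fun y : ℝ => (1 - y ^ 2) * (deriv (legendreP (n + 1)) y) ^ 2
      + ((n + 1 : ℕ) : ℝ) ^ 2 * (legendreP (n + 1) y) ^ 2) =
      fun y => (christoffelPoly (n + 1 : ℕ) (legendrePoly (n + 1))).eval y := by
    ext y
    simp [christoffelPoly, deriv_legendreP, legendreP_eq_eval]
  have hF'' := eval_derivative_derivative_christoffelPoly (legendrePoly_ode (n + 1)) hx2.ne'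
    (by exact_mod_cast hcrit)
  rw [hF, deriv_deriv_eval, hF'', deriv_legendreP]
  refine ⟨rfl, div_neg_of_neg_of_pos ?_ hx2⟩
  have hn : (1 : ℝ) ≤ n := by exact_mod_cast (by omega : 1 ≤ n)
  have hd : 0 < (derivative (legendrePoly (n + 1))).eval x ^ 2 := by
    rw [deriv_legendreP] at hderiv
    exact sq_pos_iff.mpr hderiv
  push_cast
  nlinarith
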